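/- Let α, α′ and d be integers with d ≥ 0 and 1 ≤ α′ ≤ α, and fix positive integers r_0 = 1, r_1, …, r_{d+1} with r_{e−1} dividing r_e for each e. Then, as functions on {0,1}^α × {0,1}^α, the coloring c_d refines the function (v,w) ↦ c_d(π_{α′}(v), π_{α′}(w)). -/

import Mathlib

/-!
Coloring machinery of Conlon–Fox–Lee–Sudakov. Vectors in `{0,1}^α` are modelled as
`Bool` lists of length `α`. Fix block lengths `r 0 = 1, r 1, …` with `r d ∣ r (d+1)`.
-/

/-- The blocks of resolution with block length `r`: split a vector into consecutive
blocks of length `r` (the last block may be shorter). -/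
def blocksOf (r : ℕ) (v : List Bool) : List (List Bool) := v.toChunks r

/-- The function `η_d` (with `r = r_d`): records the position `i` of the first pair of
differing blocks of resolution `d` together with the unordered pair `{v_i, w_i}` of
these blocks; it takes the value `none` (playing the role of `0`) when `v = w`. -/
def eta (r : ℕ) (v w : List Bool) : Option (ℕ × Sym2 (List Bool)) :=
  ((((blocksOf r v).zip (blocksOf r w)).zipIdx.map Prod.swap).find? (fun q => q.2.1 != q.2.2)).map
    (fun q => (q.1, s(q.2.1, q.2.2)))

/-- The function `ξ_d`: apply `η_d` to each corresponding pair of blocks of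
resolution `d+1`. -/
def xi (r : ℕ → ℕ) (d : ℕ) (v w : List Bool) : List (Option (ℕ × Sym2 (List Bool))) :=
  ((blocksOf (r (d+1)) v).zip (blocksOf (r (d+1)) w)).map fun q => eta (r d) q.1 q.2

/-- The type of colors used by the coloring `c_p`. -/
abbrev EGColor := List (List (Option (ℕ × Sym2 (List Bool))))

instance : DecidableEq (List (Option (ℕ × Sym2 (List Bool)))) := instDecidableEqList
instance : DecidableEq EGColor := instDecidableEqList

/-- The coloring `c_p (v,w) = (ξ_p(v,w), ξ_{p-1}(v,w), …, ξ_0(v,w))`. -/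
def cColor (r : ℕ → ℕ) (p : ℕ) (v w : List Bool) : EGColor :=
  (List.range (p+1)).map fun j => xi r (p - j) v w

/-- The set of colors appearing under `c_p` on (unordered) pairs of distinct
elements of `S`. -/
def colorsOn (r : ℕ → ℕ) (p : ℕ) (S : Finset (List Bool)) : Finset EGColor :=
  ((S ×ˢ S).filter fun q => q.1 ≠ q.2).image fun q => cColor r p q.1 q.2

/-- The vertex set `{0,1}^α`, realized as the set of all `Bool` lists of length `α`. -/
def allVecs (α : ℕ) : Finset (List Bool) :=
  Finset.univ.image fun v : Fin α → Bool => List.ofFn v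

/-- `alphaD rd α`: the largest multiple of `rd` that is strictly less than `α`
(for `α, rd ≥ 1`). -/
def alphaD (rd α : ℕ) : ℕ := rd * ((α - 1) / rd)

/-- The set `C_E^{(d)}` of emerging colors of `S` at resolution `d`: the unordered pairs
`{v'', w''}` of final segments of elements `v = (v', v'')`, `w = (w', w'')` of `S`
(split at `α_d`) with `v' = w'` and `v'' ≠ w''`. -/
def CEset (r : ℕ → ℕ) (α : ℕ) (S : Finset (List Bool)) (d : ℕ) : Finset (Sym2 (List Bool)) :=
  ((S ×ˢ S).filter fun q =>
      q.1.take (alphaD (r d) α) = q.2.take (alphaD (r d) α) ∧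
      q.1.drop (alphaD (r d) α) ≠ q.2.drop (alphaD (r d) α)).image
    fun q => s(q.1.drop (alphaD (r d) α), q.2.drop (alphaD (r d) α))

/-- The set `C_I^{(d)}` of inherited colors of `S` at resolution `d`: the pairs
`(c_p(v', w'), η_{d-1}(v'', w''))` over elements `v = (v', v'')`, `w = (w', w'')` of `S`
(split at `α_d`) with `v' ≠ w'`. -/
def CIset (r : ℕ → ℕ) (p α : ℕ) (S : Finset (List Bool)) (d : ℕ) :
    Finset (EGColor × Option (ℕ × Sym2 (List Bool))) :=
  ((S ×ˢ S).filter fun q =>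
      q.1.take (alphaD (r d) α) ≠ q.2.take (alphaD (r d) α)).image
    fun q => (cColor r p (q.1.take (alphaD (r d) α)) (q.2.take (alphaD (r d) α)),
              eta (r (d-1)) (q.1.drop (alphaD (r d) α)) (q.2.drop (alphaD (r d) α)))

/-!
If two vectors first differ in block `k` of resolution `e`, then their truncations at `b` agree
on the blocks before `k` and have as block `k` the truncations of the original blocks `k` at
`b - k * r e`; they first differ there unless that cut removes every difference. So `η_e` of the
truncated pair is a function of `η_e` of the pair, and applying this to each block of resolution
`e + 1` makes `ξ_e` of the truncations a function of `ξ_e` of the originals.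
-/

namespace List

variable {α : Type*}

theorem toChunks_go_eq {n : ℕ} :
    ∀ (xs : List α) (acc₁ : Array α) (acc₂ : Array (List α)),
    0 < acc₁.size → acc₁.size ≤ n →
    toChunks.go n xs acc₁ acc₂ =
      acc₂.toList ++
        (acc₁.toList ++ xs.take (n - acc₁.size)) :: (xs.drop (n - acc₁.size)).toChunks n
  | [], acc₁, acc₂, _, _ => by simp [toChunks.go, toChunks]
  | x :: xs, acc₁, acc₂, hpos, hle => by
    rw [toChunks.go]
    by_cases hfull : acc₁.size = n
    · obtain ⟨m, rfl⟩ : ∃ m, n = m + 1 := ⟨n - 1, by omega⟩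
      have hchunks : (x :: xs).toChunks (m + 1) = toChunks.go (m + 1) xs #[x] #[] := rfl
      rw [if_pos (beq_iff_eq.mpr hfull), toChunks_go_eq xs _ _ (by simp) (by simp), hfull,
        Nat.sub_self, drop_zero, hchunks, toChunks_go_eq xs #[x] #[] (by simp) (by simp)]
      simp
    · rw [if_neg (by simpa using hfull), toChunks_go_eq xs _ _ (by simp) (by simp; omega)]
      obtain ⟨m, hm⟩ : ∃ m, n - acc₁.size = m + 1 := ⟨n - acc₁.size - 1, by omega⟩
      simp [hm, show n - (acc₁.size + 1) = m by omega]

theorem toChunks_of_ne_nil {n : ℕ} (hn : 0 < n) {l : List α} (hl : l ≠ []) :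
    l.toChunks n = l.take n :: (l.drop n).toChunks n := by
  obtain ⟨m, rfl⟩ := Nat.exists_eq_succ_of_ne_zero hn.ne'
  obtain ⟨x, xs, rfl⟩ := exists_cons_of_ne_nil hl
  have hchunks : (x :: xs).toChunks (m + 1) = toChunks.go (m + 1) xs #[x] #[] := rfl
  rw [hchunks, toChunks_go_eq (n := m + 1) xs #[x] #[] (by simp) (by simp)]
  simp

end List

theorem blocksOf_nil (r : ℕ) : blocksOf r [] = [] := by
  cases r <;> rfl

theorem blocksOf_of_ne_nil {r : ℕ} (hr : 0 < r) {l : List Bool} (hl : l ≠ []) :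
    blocksOf r l = l.take r :: blocksOf r (l.drop r) :=
  List.toChunks_of_ne_nil hr hl

@[simp] theorem eta_nil_left (r : ℕ) (t : List Bool) : eta r [] t = none := by
  simp [eta, blocksOf_nil]

@[simp] theorem eta_nil_right (r : ℕ) (s : List Bool) : eta r s [] = none := by
  simp [eta, blocksOf_nil]

theorem eta_of_ne_nil {r : ℕ} (hr : 0 < r) {s t : List Bool} (hs : s ≠ []) (ht : t ≠ []) :
    eta r s t = if s.take r = t.take r then
        (eta r (s.drop r) (t.drop r)).map (Prod.map (· + 1) id)
      else some (0, s(s.take r, t.take r)) := by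
  rw [eta, blocksOf_of_ne_nil hr hs, blocksOf_of_ne_nil hr ht]
  split_ifs with h
  · simp [h, eta, List.zipIdx_succ, List.find?_map, Option.map_map, Function.comp_def]
  · simp [h]

def etaTake (r b : ℕ) : Option (ℕ × Sym2 (List Bool)) → Option (ℕ × Sym2 (List Bool))
  | none => none
  | some (k, P) =>
    let P' := P.map (List.take (b - k * r))
    if P'.IsDiag then none else some (k, P')

@[simp] theorem etaTake_zero (r : ℕ) (o : Option (ℕ × Sym2 (List Bool))) :
    etaTake r 0 o = none := by
  rcases o with _ | ⟨k, ⟨a, c⟩⟩ <;> simp [etaTake]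

theorem etaTake_map_succ (r b : ℕ) (o : Option (ℕ × Sym2 (List Bool))) :
    etaTake r b (o.map (Prod.map (· + 1) id)) =
      (etaTake r (b - r) o).map (Prod.map (· + 1) id) := by
  rcases o with _ | ⟨k, P⟩
  · rfl
  · have hb : b - (k + 1) * r = b - r - k * r := by rw [Nat.sub_sub, add_mul, one_mul, add_comm]
    simp only [Option.map_some, Prod.map_apply, id_eq, etaTake, hb]
    split_ifs <;> rfl

theorem eta_take {r : ℕ} (hr : 0 < r) (s t : List Bool) (b : ℕ) :
    eta r (s.take b) (t.take b) = etaTake r b (eta r s t) := by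
  rcases eq_or_ne s [] with rfl | hs
  · simp [etaTake]
  rcases eq_or_ne t [] with rfl | ht
  · simp [etaTake]
  rcases Nat.eq_zero_or_pos b with rfl | hb
  · simp
  have hsb : s.take b ≠ [] := by simp [hs, hb.ne']
  have htb : t.take b ≠ [] := by simp [ht, hb.ne']
  rw [eta_of_ne_nil hr hsb htb, eta_of_ne_nil hr hs ht]
  simp only [List.take_take, List.drop_take]
  by_cases hfirst : s.take r = t.take r
  · have hprefix : s.take (min r b) = t.take (min r b) := by
      rw [min_comm, ← List.take_take, hfirst, List.take_take]
    rw [if_pos hprefix, if_pos hfirst, eta_take hr (s.drop r) (t.drop r) (b - r), etaTake_map_succ]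
  · simp only [if_neg hfirst, etaTake, zero_mul, Nat.sub_zero, Sym2.map_mk,
      Sym2.mk_isDiag_iff, List.take_take, min_comm b r]
    split_ifs with hprefix
    · have hbr : b < r := by
        by_contra! hrb
        rw [min_eq_left hrb] at hprefix
        exact hfirst hprefix
      simp [Nat.sub_eq_zero_of_le hbr.le]
    · rfl
termination_by s.length
decreasing_by simp only [List.length_drop]; have := List.length_pos_iff.mpr hs; omega

@[simp] theorem xi_nil_left (r : ℕ → ℕ) (e : ℕ) (w : List Bool) : xi r e [] w = [] := by
  simp [xi, blocksOf_nil]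

@[simp] theorem xi_nil_right (r : ℕ → ℕ) (e : ℕ) (v : List Bool) : xi r e v [] = [] := by
  simp [xi, blocksOf_nil]

theorem xi_of_ne_nil {r : ℕ → ℕ} {e : ℕ} (hr : 0 < r (e + 1)) {v w : List Bool}
    (hv : v ≠ []) (hw : w ≠ []) :
    xi r e v w = eta (r e) (v.take (r (e + 1))) (w.take (r (e + 1)))
      :: xi r e (v.drop (r (e + 1))) (w.drop (r (e + 1))) := by
  simp only [xi, blocksOf_of_ne_nil hr hv, blocksOf_of_ne_nil hr hw, List.zip_cons_cons,
    List.map_cons]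

def xiTake (r R : ℕ) :
    ℕ → List (Option (ℕ × Sym2 (List Bool))) → List (Option (ℕ × Sym2 (List Bool)))
  | _, [] => []
  | c, o :: L => if c = 0 then [] else etaTake r c o :: xiTake r R (c - R) L

theorem xi_take {r : ℕ → ℕ} {e : ℕ} (h₀ : 0 < r e) (h₁ : 0 < r (e + 1))
    (v w : List Bool) (c : ℕ) :
    xi r e (v.take c) (w.take c) = xiTake (r e) (r (e + 1)) c (xi r e v w) := by
  rcases eq_or_ne v [] with rfl | hv
  · simp [xiTake]
  rcases eq_or_ne w [] with rfl | hw
  · simp [xiTake]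
  rw [xi_of_ne_nil h₁ hv hw, xiTake]
  rcases Nat.eq_zero_or_pos c with rfl | hc
  · simp
  have hvc : v.take c ≠ [] := by simp [hv, hc.ne']
  have hwc : w.take c ≠ [] := by simp [hw, hc.ne']
  rw [if_neg hc.ne', xi_of_ne_nil h₁ hvc hwc, List.take_take, List.take_take, min_comm,
    ← List.take_take, ← List.take_take (l := w), eta_take h₀, List.drop_take, List.drop_take,
    xi_take h₀ h₁ (v.drop (r (e + 1))) (w.drop (r (e + 1)))]
termination_by v.length
decreasing_by simp only [List.length_drop]; have := List.length_pos_iff.mpr hv; omega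

theorem cColor_eq_cColor_iff {r : ℕ → ℕ} {d : ℕ} {v w x y : List Bool} :
    cColor r d v w = cColor r d x y ↔ ∀ e ≤ d, xi r e v w = xi r e x y := by
  simp only [cColor, List.map_inj_left, List.mem_range, Nat.lt_succ_iff]
  constructor
  · intro h e he
    simpa [Nat.sub_sub_self he] using h (d - e) (Nat.sub_le d e)
  · exact fun h j _ => h (d - j) (Nat.sub_le d j)

theorem stmt7_general (α' d : ℕ) (r : ℕ → ℕ) (hrpos : ∀ e, 0 < r e) (v w x y : List Bool)
    (h : cColor r d v w = cColor r d x y) :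
    cColor r d (v.take α') (w.take α') = cColor r d (x.take α') (y.take α') := by
  rw [cColor_eq_cColor_iff] at h ⊢
  intro e he
  rw [xi_take (hrpos e) (hrpos (e + 1)), xi_take (hrpos e) (hrpos (e + 1)), h e he]

/-- **Lemma 4.2(iii).** For `d ≥ 0` and `1 ≤ α' ≤ α`, the coloring `c_d` refines
`(v, w) ↦ c_d(π_{α'}(v), π_{α'}(w))` on `{0,1}^α × {0,1}^α`. -/
theorem stmt7 (α α' d : ℕ) (hα' : 1 ≤ α') (hα : α' ≤ α) (r : ℕ → ℕ) (hr0 : r 0 = 1)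
    (hrpos : ∀ e, 0 < r e) (hrdvd : ∀ e, r e ∣ r (e + 1))
    (v w x y : List Bool) (hv : v.length = α) (hw : w.length = α)
    (hx : x.length = α) (hy : y.length = α)
    (h : cColor r d v w = cColor r d x y) :
    cColor r d (v.take α') (w.take α') = cColor r d (x.take α') (y.take α') :=
  stmt7_general α' d r hrpos v w x y h
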